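/- Let G be a generalized Hadamard matrix with symmetric core, first row all 1's, and first column -1 below the top entry, and let γ : V(n,q) → ℂ satisfy γ(x) = Σ_{s ∈ V(n,q)} α_s · MG(x;s). Then for every ℓ ∈ V(n,q): α_ℓ = (-1)^{ℓ_0} · q^{-n} · Σ_{i ∈ V(n,q)} (-1)^{i_0} · γ(i) · conj(MG(ℓ;i)). -/

import Mathlib

open Finset

/-- `V n q` is the set of weak compositions of `n` into `q` parts. -/
def V (n q : ℕ) : Finset (Fin q → ℕ) :=
  (Fintype.piFinset fun _ : Fin q => Finset.range (n + 1)).filter fun p => ∑ i, p i = n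

open scoped Classical in
/-- The m-polynomial `MG(p; s)` with respect to the matrix `G`. -/
noncomputable def MG {q : ℕ} (n : ℕ) (G : Matrix (Fin q) (Fin q) ℂ)
    (p s : Fin q → ℕ) : ℂ :=
  ∑ r ∈ (Fintype.piFinset fun _ : Fin q => Fintype.piFinset fun _ : Fin q =>
      Finset.range (n + 1)).filter
      (fun r => (∀ i, ∑ j, r i j = s i) ∧ (∀ j, ∑ i, r i j = p j)),
    ((∏ i, Nat.factorial (s i) : ℕ) : ℂ) / ((∏ i, ∏ j, Nat.factorial (r i j) : ℕ) : ℂ) *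
      ∏ i, ∏ j, G i j ^ r i j

/-! `MG` is the matrix of the `n`-th symmetric power: `MG n A p s` is the coefficient of `X^p` in
`∏ i, (∑ j, A i j * X j) ^ s i`. Substituting linear forms into this polynomial shows
`MG (A * B) = MG A * MG B`, and `MG` of a diagonal matrix is diagonal. For `D = diag(-1, 1, …, 1)`
the sign pattern of `G` makes `D * G` symmetric, so `G * (D * conj G) = G * Gᴴ * D = q • D`.
Applying `MG` gives `∑ i, (-1)^(i 0) MG(i; s) conj MG(ℓ; i) = δ(s, ℓ) (-1)^(ℓ 0) q^n`, which
inverts the expansion of `γ`. -/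

open MvPolynomial Matrix

section RowForms

variable {R σ : Type*} [CommSemiring R] [Fintype σ]

noncomputable def rowFormsPow (A : Matrix σ σ R) (s : σ → ℕ) : MvPolynomial σ R :=
  ∏ i, (∑ j, C (A i j) * X j) ^ s i

theorem monomial_equivFunOnFinite_symm (p : σ → ℕ) (c : R) :
    monomial (Finsupp.equivFunOnFinite.symm p) c = C c * ∏ j, X j ^ p j := by
  rw [monomial_eq, Finsupp.prod_fintype _ _ (fun _ => pow_zero _)]
  rfl

theorem aeval_rowFormsPow (A B : Matrix σ σ R) (s : σ → ℕ) :
    aeval (fun j => ∑ m, C (B j m) * X m) (rowFormsPow A s) = rowFormsPow (A * B) s := by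
  simp only [rowFormsPow, map_prod, map_pow, map_sum, map_mul, aeval_C, aeval_X, algebraMap_eq]
  refine prod_congr rfl fun i _ => congrArg (· ^ s i) ?_
  simp only [mul_apply, map_sum, sum_mul, mul_sum, ← mul_assoc, ← C_mul]
  exact sum_comm

theorem aeval_monomial_equivFunOnFinite_symm (B : Matrix σ σ R) (p : σ → ℕ) (c : R) :
    aeval (fun j => ∑ m, C (B j m) * X m) (monomial (Finsupp.equivFunOnFinite.symm p) c) =
      C c * rowFormsPow B p := by
  simp only [monomial_equivFunOnFinite_symm, map_mul, aeval_C, algebraMap_eq, map_prod,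
    map_pow, aeval_X, rowFormsPow]

variable [DecidableEq σ]

theorem linearForm_pow (a : σ → R) (m : ℕ) :
    (∑ j, C (a j) * X j) ^ m = ∑ k ∈ piAntidiag univ m,
      monomial (Finsupp.equivFunOnFinite.symm k) (Nat.multinomial univ k * ∏ j, a j ^ k j) := by
  rw [sum_pow_eq_sum_piAntidiag]
  refine sum_congr rfl fun k _ => ?_
  simp only [monomial_equivFunOnFinite_symm, mul_pow, prod_mul_distrib, map_mul, map_prod,
    map_pow, map_natCast, mul_assoc]

theorem rowFormsPow_diagonal (c : σ → R) (s : σ → ℕ) :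
    rowFormsPow (diagonal c) s = monomial (Finsupp.equivFunOnFinite.symm s) (∏ i, c i ^ s i) := by
  simp only [rowFormsPow, diagonal_apply, apply_ite C, map_zero, ite_mul, zero_mul, sum_ite_eq,
    mem_univ, if_true, monomial_equivFunOnFinite_symm, mul_pow, prod_mul_distrib, map_prod, map_pow]

theorem rowFormsPow_diagonal_mul (c : σ → R) (A : Matrix σ σ R) (s : σ → ℕ) :
    rowFormsPow (diagonal c * A) s = C (∏ i, c i ^ s i) * rowFormsPow A s := by
  simp only [rowFormsPow, diagonal_mul, C_mul, mul_assoc, ← mul_sum, mul_pow, prod_mul_distrib,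
    map_prod, map_pow]

end RowForms

section Expansion

variable {q n : ℕ}

theorem multinomial_eq_div {K σ : Type*} [Field K] [CharZero K] (s : Finset σ) (k : σ → ℕ) :
    (Nat.multinomial s k : K) = ((∑ j ∈ s, k j).factorial : K) / ∏ j ∈ s, ((k j).factorial : K) := by
  rw [eq_div_iff (prod_ne_zero_iff.2 fun j _ => Nat.cast_ne_zero.2 (Nat.factorial_ne_zero _)),
    mul_comm, ← Nat.multinomial_spec s k]
  push_cast
  rfl

theorem mem_V_iff {p : Fin q → ℕ} : p ∈ V n q ↔ ∑ i, p i = n := by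
  simp only [V, mem_filter, Fintype.mem_piFinset, mem_range, and_iff_right_iff_imp]
  intro hp i
  exact Nat.lt_succ_of_le (hp ▸ single_le_sum (fun j _ => Nat.zero_le (p j)) (mem_univ i))

theorem le_of_mem_V {p : Fin q → ℕ} (hp : p ∈ V n q) (i : Fin q) : p i ≤ n :=
  Nat.lt_succ_iff.1 (mem_range.1 (Fintype.mem_piFinset.1 (mem_filter.1 hp).1 i))

theorem rowFormsPow_eq_sum_MG (A : Matrix (Fin q) (Fin q) ℂ) {s : Fin q → ℕ} (hs : s ∈ V n q) :
    rowFormsPow A s =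
      ∑ p ∈ V n q, monomial (Finsupp.equivFunOnFinite.symm p) (MG n A p s) := by
  have hmem : ∀ r ∈ Fintype.piFinset fun i => piAntidiag univ (s i), ∑ i, r i ∈ V n q := by
    intro r hr
    rw [mem_V_iff, ← mem_V_iff.1 hs]
    simp only [Fintype.mem_piFinset, mem_piAntidiag] at hr
    simp only [Finset.sum_apply]
    rw [sum_comm]
    exact sum_congr rfl fun i _ => (hr i).1
  simp only [rowFormsPow, linearForm_pow, prod_univ_sum, ← monomial_sum_prod]
  rw [← sum_fiberwise_of_maps_to hmem]
  refine sum_congr rfl fun p hp => ?_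
  have hexp : ∀ r : Fin q → Fin q → ℕ, ∑ i, Finsupp.equivFunOnFinite.symm (r i) =
      Finsupp.equivFunOnFinite.symm (∑ i, r i) :=
    fun r => Finsupp.ext fun j => by simp [Finsupp.finsetSum_apply, Finset.sum_apply]
  rw [sum_congr rfl fun r hr => by rw [hexp, (mem_filter.1 hr).2], ← map_sum]
  congr 1
  unfold MG
  refine sum_congr ?_ fun r hr => ?_
  · ext r
    simp only [mem_filter, Fintype.mem_piFinset, mem_piAntidiag, mem_univ, implies_true, and_true,
      mem_range, funext_iff, Finset.sum_apply]
    constructor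
    · rintro ⟨hrow, hcol⟩
      refine ⟨fun i j => Nat.lt_succ_of_le ?_, hrow, hcol⟩
      calc r i j ≤ ∑ j', r i j' := single_le_sum (fun _ _ => Nat.zero_le _) (mem_univ j)
        _ = s i := hrow i
        _ ≤ n := le_of_mem_V hs i
    · rintro ⟨-, hrow, hcol⟩
      exact ⟨hrow, hcol⟩
  · have hrow := (mem_filter.1 hr).2.1
    rw [prod_mul_distrib]
    congr 1
    push_cast
    rw [← prod_div_distrib]
    exact prod_congr rfl fun i _ => by rw [multinomial_eq_div, hrow i]

end Expansion

section MGAlgebra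

variable {q n : ℕ} {ℓ s : Fin q → ℕ}

theorem coeff_rowFormsPow (A : Matrix (Fin q) (Fin q) ℂ) (hℓ : ℓ ∈ V n q) (hs : s ∈ V n q) :
    coeff (Finsupp.equivFunOnFinite.symm ℓ) (rowFormsPow A s) = MG n A ℓ s := by
  simp only [rowFormsPow_eq_sum_MG A hs, coeff_sum, coeff_monomial, EmbeddingLike.apply_eq_iff_eq,
    sum_ite_eq', if_pos hℓ]

theorem MG_mul (A B : Matrix (Fin q) (Fin q) ℂ) (hℓ : ℓ ∈ V n q) (hs : s ∈ V n q) :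
    MG n (A * B) ℓ s = ∑ p ∈ V n q, MG n A p s * MG n B ℓ p := by
  rw [← coeff_rowFormsPow _ hℓ hs, ← aeval_rowFormsPow, rowFormsPow_eq_sum_MG A hs, map_sum,
    coeff_sum]
  refine sum_congr rfl fun p hp => ?_
  rw [aeval_monomial_equivFunOnFinite_symm, coeff_C_mul, coeff_rowFormsPow B hℓ hp]

theorem MG_diagonal (c : Fin q → ℂ) (hℓ : ℓ ∈ V n q) (hs : s ∈ V n q) :
    MG n (diagonal c) ℓ s = if s = ℓ then ∏ i, c i ^ s i else 0 := by
  rw [← coeff_rowFormsPow _ hℓ hs, rowFormsPow_diagonal, coeff_monomial]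
  simp only [EmbeddingLike.apply_eq_iff_eq]

theorem MG_diagonal_mul (c : Fin q → ℂ) (A : Matrix (Fin q) (Fin q) ℂ) (hℓ : ℓ ∈ V n q)
    (hs : s ∈ V n q) : MG n (diagonal c * A) ℓ s = (∏ i, c i ^ s i) * MG n A ℓ s := by
  rw [← coeff_rowFormsPow _ hℓ hs, rowFormsPow_diagonal_mul, coeff_C_mul, coeff_rowFormsPow A hℓ hs]

theorem MG_map_starRingEnd (A : Matrix (Fin q) (Fin q) ℂ) (p s : Fin q → ℕ) :
    MG n (A.map (starRingEnd ℂ)) p s = starRingEnd ℂ (MG n A p s) := by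
  simp only [MG, map_sum, map_mul, map_div₀, map_natCast, map_prod, map_pow, Matrix.map_apply]

end MGAlgebra

section Hadamard

variable {q : ℕ} [NeZero q]

def negFirst (q : ℕ) [NeZero q] : Fin q → ℂ := fun i => if i = 0 then -1 else 1

theorem prod_negFirst_pow (p : Fin q → ℕ) : ∏ i, negFirst q i ^ p i = (-1) ^ p 0 := by
  rw [Fintype.prod_eq_single 0 fun i hi => by simp [negFirst, hi]]
  simp [negFirst]

variable (G : Matrix (Fin q) (Fin q) ℂ)

theorem negFirst_mul_map_starRingEnd (hrow : ∀ j, G 0 j = 1) (hcol : ∀ i, i ≠ 0 → G i 0 = -1)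
    (hcore : ∀ i j, i ≠ 0 → j ≠ 0 → G i j = G j i) :
    diagonal (negFirst q) * G.map (starRingEnd ℂ) = Gᴴ * diagonal (negFirst q) := by
  ext j b
  simp only [diagonal_mul, mul_diagonal, conjTranspose_apply, map_apply, negFirst, RCLike.star_def]
  rcases eq_or_ne j 0 with rfl | hj <;> rcases eq_or_ne b 0 with rfl | hb
  · ring
  · simp [hrow, hcol b hb, hb]
  · simp [hrow, hcol j hj, hj]
  · simp [hj, hb, hcore j b hj hb]

theorem mul_negFirst_mul_map_starRingEnd (hG : G * G.conjTranspose = (q : ℂ) • 1)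
    (hrow : ∀ j, G 0 j = 1) (hcol : ∀ i, i ≠ 0 → G i 0 = -1)
    (hcore : ∀ i j, i ≠ 0 → j ≠ 0 → G i j = G j i) :
    G * (diagonal (negFirst q) * G.map (starRingEnd ℂ)) =
      diagonal fun i => (q : ℂ) * negFirst q i := by
  rw [negFirst_mul_map_starRingEnd G hrow hcol hcore, ← mul_assoc, hG, smul_mul, one_mul,
    ← diagonal_smul]
  rfl

variable {n : ℕ} {ℓ s : Fin q → ℕ}

theorem MG_orthogonality (hG : G * G.conjTranspose = (q : ℂ) • 1)
    (hrow : ∀ j, G 0 j = 1) (hcol : ∀ i, i ≠ 0 → G i 0 = -1)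
    (hcore : ∀ i j, i ≠ 0 → j ≠ 0 → G i j = G j i) (hℓ : ℓ ∈ V n q) (hs : s ∈ V n q) :
    ∑ i ∈ V n q, (-1 : ℂ) ^ i 0 * MG n G i s * starRingEnd ℂ (MG n G ℓ i) =
      if s = ℓ then (-1 : ℂ) ^ ℓ 0 * (q : ℂ) ^ n else 0 := by
  calc ∑ i ∈ V n q, (-1 : ℂ) ^ i 0 * MG n G i s * starRingEnd ℂ (MG n G ℓ i)
      = ∑ i ∈ V n q, MG n G i s * MG n (diagonal (negFirst q) * G.map (starRingEnd ℂ)) ℓ i :=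
        sum_congr rfl fun i hi => by
          rw [MG_diagonal_mul _ _ hℓ hi, MG_map_starRingEnd, prod_negFirst_pow]
          ring
    _ = MG n (diagonal fun i => (q : ℂ) * negFirst q i) ℓ s := by
        rw [← mul_negFirst_mul_map_starRingEnd G hG hrow hcol hcore, MG_mul _ _ hℓ hs]
    _ = if s = ℓ then (-1 : ℂ) ^ ℓ 0 * (q : ℂ) ^ n else 0 := by
        rw [MG_diagonal _ hℓ hs]
        split_ifs with hsℓ
        · subst hsℓ
          rw [← prod_negFirst_pow, mul_comm, ← mem_V_iff.1 hs, ← prod_pow_eq_pow_sum,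
            ← prod_mul_distrib]
          simp only [mul_pow]
        · rfl

end Hadamard

theorem stmt9_general (q n : ℕ) [NeZero q]
    (G : Matrix (Fin q) (Fin q) ℂ) (hG : G * G.conjTranspose = (q : ℂ) • 1)
    (hrow : ∀ j, G 0 j = 1) (hcol : ∀ i, i ≠ 0 → G i 0 = -1)
    (hcore : ∀ i j, i ≠ 0 → j ≠ 0 → G i j = G j i)
    (γ α : (Fin q → ℕ) → ℂ)
    (hγ : ∀ x ∈ V n q, γ x = ∑ s ∈ V n q, α s * MG n G x s)
    (ℓ : Fin q → ℕ) (hℓ : ℓ ∈ V n q) :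
    α ℓ = (-1 : ℂ) ^ (ℓ 0) * ((q : ℂ) ^ n)⁻¹ *
      ∑ i ∈ V n q, (-1 : ℂ) ^ (i 0) * γ i * (starRingEnd ℂ) (MG n G ℓ i) := by
  have hsum : ∑ i ∈ V n q, (-1 : ℂ) ^ i 0 * γ i * starRingEnd ℂ (MG n G ℓ i) =
      α ℓ * ((-1 : ℂ) ^ ℓ 0 * (q : ℂ) ^ n) := by
    calc ∑ i ∈ V n q, (-1 : ℂ) ^ i 0 * γ i * starRingEnd ℂ (MG n G ℓ i)
        = ∑ i ∈ V n q, ∑ s ∈ V n q,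
            α s * ((-1 : ℂ) ^ i 0 * MG n G i s * starRingEnd ℂ (MG n G ℓ i)) :=
          sum_congr rfl fun i hi => by
            rw [hγ i hi, mul_sum, sum_mul]
            exact sum_congr rfl fun s _ => by ring
      _ = ∑ s ∈ V n q, α s * if s = ℓ then (-1 : ℂ) ^ ℓ 0 * (q : ℂ) ^ n else 0 := by
          rw [sum_comm]
          refine sum_congr rfl fun s hs => ?_
          rw [← MG_orthogonality G hG hrow hcol hcore hℓ hs, mul_sum]
      _ = α ℓ * ((-1 : ℂ) ^ ℓ 0 * (q : ℂ) ^ n) := by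
          simp only [mul_ite, mul_zero, sum_ite_eq', if_pos hℓ]
  have hqn : (q : ℂ) ^ n ≠ 0 := pow_ne_zero _ (Nat.cast_ne_zero.2 (NeZero.ne q))
  rw [hsum]
  field_simp
  rw [← pow_mul, Even.neg_one_pow ⟨ℓ 0, by ring⟩, mul_one]

theorem stmt9 (q n : ℕ) [NeZero q] (hq : 2 ≤ q) (hn : 0 < n)
    (G : Matrix (Fin q) (Fin q) ℂ) (hG : G * G.conjTranspose = (q : ℂ) • 1)
    (hrow : ∀ j, G 0 j = 1) (hcol : ∀ i, i ≠ 0 → G i 0 = -1)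
    (hcore : ∀ i j, i ≠ 0 → j ≠ 0 → G i j = G j i)
    (γ α : (Fin q → ℕ) → ℂ)
    (hγ : ∀ x ∈ V n q, γ x = ∑ s ∈ V n q, α s * MG n G x s)
    (ℓ : Fin q → ℕ) (hℓ : ℓ ∈ V n q) :
    α ℓ = (-1 : ℂ) ^ (ℓ 0) * ((q : ℂ) ^ n)⁻¹ *
      ∑ i ∈ V n q, (-1 : ℂ) ^ (i 0) * γ i * (starRingEnd ℂ) (MG n G ℓ i) :=
  stmt9_general q n G hG hrow hcol hcore γ α hγ ℓ hℓ
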